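/- Let G be a Carnot group of homogeneous dimension Q. For every f ∈ L^Q(G), the linear functional Λ(f) on BV^{Q/(Q-1)}_H(G) defined by ⟨Λ(f), g⟩ := ∫_G f g dx is a charge vanishing at infinity, and ‖Λ(f)‖_{Ch_0} ≤ C_GN ‖f‖_{L^Q}. Hence Λ : L^Q(G) → Ch_0(G) is a bounded linear operator whose norm is bounded by the Gagliardo–Nirenberg constant C_GN. -/

import Mathlib

open MeasureTheory Filter Topology
open scoped ENNReal NNReal

noncomputable section

/-- Euclidean space `ℝ^n`, used as exponential coordinates of a Carnot group. -/
abbrev E (n : ℕ) : Type := EuclideanSpace ℝ (Fin n)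

/-- The family of vector fields obtained from the frame `X` by iterated Lie brackets. -/
inductive LieGen {n m : ℕ} (X : Fin m → E n → E n) : (E n → E n) → Prop
  | base (j : Fin m) : LieGen X (X j)
  | bracket {Y Z : E n → E n} : LieGen X Y → LieGen X Z →
      LieGen X (fun x => fderiv ℝ Z x (Y x) - fderiv ℝ Y x (Z x))

/-- `D(Ω, HΩ)`: smooth horizontal vector fields compactly supported in `Ω`
(identified with their components `Φ : E n → E m` in the horizontal frame). -/
def IsTestVF {n m : ℕ} (Ω : Set (E n)) (Φ : E n → E m) : Prop :=
  ContDiff ℝ (⊤ : ℕ∞) Φ ∧ HasCompactSupport Φ ∧ tsupport Φ ⊆ Ω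

/-- A Carnot group of topological dimension `n`, with `m`-dimensional horizontal layer,
written in exponential coordinates: the underlying space is `ℝ^n`, the Haar measure is
the Lebesgue measure, the inverse of `x` is `-x`, and the stratification is encoded by the
one-parameter family of dilations `dil`, which are group automorphisms scaling the Lebesgue
measure by `t ^ Q` (where `Q` is the homogeneous dimension); the horizontal bundle is framed
by the left-invariant vector fields `X j`, which are `dil`-homogeneous of degree one (i.e.
they belong to the first layer) and generate the whole Lie algebra by iterated brackets.
The frame `X 0, …, X (m-1)` is declared orthonormal, so horizontal vector fields are
identified with their components, i.e. with functions `E n → E m`. -/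
structure CarnotGroup (n m : ℕ) : Type where
  mul : E n → E n → E n
  mul_assoc' : ∀ x y z, mul (mul x y) z = mul x (mul y z)
  zero_mul' : ∀ x, mul 0 x = x
  mul_zero' : ∀ x, mul x 0 = x
  mul_neg' : ∀ x, mul x (-x) = 0
  smooth_mul : ContDiff ℝ (⊤ : ℕ∞) fun p : E n × E n => mul p.1 p.2
  /-- the Lebesgue measure is a left Haar measure -/
  haar : ∀ x : E n, MeasurePreserving (fun y => mul x y) (volume : Measure (E n)) volume
  /-- the homogeneous dimension -/
  Q : ℕ
  one_lt_Q : 1 < Q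
  /-- the anisotropic dilations `δ_t` -/
  dil : ℝ → E n → E n
  dil_linear : ∀ t, IsLinearMap ℝ (dil t)
  dil_mul : ∀ t x y, dil t (mul x y) = mul (dil t x) (dil t y)
  dil_dil : ∀ s t x, dil s (dil t x) = dil (s * t) x
  dil_id : ∀ x, dil 1 x = x
  dil_measure : ∀ t : ℝ, 0 < t → ∀ A : Set (E n),
    volume (dil t '' A) = ENNReal.ofReal (t ^ Q) * volume A
  /-- the horizontal left-invariant frame -/
  X : Fin m → E n → E n
  smooth_X : ∀ j, ContDiff ℝ (⊤ : ℕ∞) (X j)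
  X_indep : LinearIndependent ℝ fun j => X j 0
  X_leftinvariant : ∀ j x y, X j (mul x y) = fderiv ℝ (fun z => mul x z) y (X j y)
  X_dil : ∀ t : ℝ, 0 < t → ∀ j x, dil t (X j x) = t • X j (dil t x)
  bracket_generating : Submodule.span ℝ {v : E n | ∃ Y, LieGen X Y ∧ Y 0 = v} = ⊤

namespace CarnotGroup

variable {n m : ℕ} (G : CarnotGroup n m)

/-- The horizontal gradient `D_H f = (X_1 f, …, X_m f)` of a function, written in the
components of the (orthonormal) horizontal frame. -/
def gradH (f : E n → ℝ) : E n → E m := fun x =>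
  (EuclideanSpace.equiv (Fin m) ℝ).symm fun j => fderiv ℝ f x (G.X j x)

/-- The horizontal divergence `div_H Φ = Σ_j X_j φ_j` of a horizontal vector field,
given by its components `Φ : E n → E m` in the horizontal frame. -/
def divH (Φ : E n → E m) : E n → ℝ := fun x => ∑ j, fderiv ℝ (fun y => Φ y j) x (G.X j x)

/-- The H-variation `‖D_H f‖(Ω)`. -/
def Hvar (Ω : Set (E n)) (f : E n → ℝ) : ℝ≥0∞ :=
  sSup {c : ℝ≥0∞ | ∃ Φ : E n → E m, IsTestVF Ω Φ ∧ (∀ x, ‖Φ x‖ ≤ 1) ∧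
    c = ENNReal.ofReal (∫ x in Ω, f x * G.divH Φ x)}

/-- `BV_H(Ω)`: integrable functions on `Ω` with finite H-variation in `Ω`. -/
def BV (Ω : Set (E n)) (f : E n → ℝ) : Prop :=
  IntegrableOn f Ω volume ∧ G.Hvar Ω f ≠ ⊤

/-- The exponent `Q/(Q-1)`. -/
def pQ : ℝ≥0∞ := (G.Q : ℝ≥0∞) / ((G.Q : ℝ≥0∞) - 1)

/-- `BV^{Q/(Q-1)}_H(𝔾)`: functions in `L^{Q/(Q-1)}` with finite H-variation. -/
def BVQ (f : E n → ℝ) : Prop :=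
  MemLp f G.pQ volume ∧ G.Hvar Set.univ f ≠ ⊤

/-- Weak convergence in `L^{Q/(Q-1)}`, tested against `L^Q`. -/
def WeakTo (f : ℕ → E n → ℝ) (f₀ : E n → ℝ) : Prop :=
  ∀ g : E n → ℝ, MemLp g (G.Q : ℝ≥0∞) volume →
    Tendsto (fun k => ∫ x, f k x * g x) atTop (𝓝 (∫ x, f₀ x * g x))

/-- `f_j ↠ 0`: weak convergence to `0` in `L^{Q/(Q-1)}` with equibounded H-variations. -/
def ToTo (f : ℕ → E n → ℝ) : Prop :=
  G.WeakTo f 0 ∧ (⨆ j, G.Hvar Set.univ (f j)) ≠ ⊤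

/-- Linearity of a functional on `BV^{Q/(Q-1)}_H(𝔾)`. -/
def LinearOnBV (F : (E n → ℝ) → ℝ) : Prop :=
  (∀ f, G.BVQ f → ∀ g, G.BVQ g → F (f + g) = F f + F g) ∧
  ∀ (c : ℝ) (f), G.BVQ f → F (c • f) = c * F f

/-- A charge vanishing at infinity: a linear functional on `BV^{Q/(Q-1)}_H(𝔾)` with
`F(f_j) → 0` whenever `f_j ↠ 0`. -/
def Charge (F : (E n → ℝ) → ℝ) : Prop :=
  G.LinearOnBV F ∧
  ∀ f : ℕ → E n → ℝ, (∀ j, G.BVQ (f j)) → G.ToTo f →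
    Tendsto (fun j => F (f j)) atTop (𝓝 0)

/-- The norm `‖F‖_{Ch₀} = sup {F f : f ∈ BV^{Q/(Q-1)}_H(𝔾), ‖D_H f‖ ≤ 1}`. -/
def chargeNorm (F : (E n → ℝ) → ℝ) : ℝ≥0∞ :=
  sSup {c : ℝ≥0∞ | ∃ f, G.BVQ f ∧ G.Hvar Set.univ f ≤ 1 ∧ c = ENNReal.ofReal (F f)}

/-- The group convolution `(f ∗ g)(x) = ∫ f(y) g(y⁻¹ x) dy`. -/
def conv (f g : E n → ℝ) : E n → ℝ := fun x => ∫ y, f y * g (G.mul (-y) x)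

/-- `(μ, σ)` represents the vector measure `[D_H g] = σ_g ‖D_H g‖` given by the structure
theorem: `μ` agrees on open sets with the H-variation of `g`, `σ` is a unit horizontal
vector field `μ`-a.e., and the integration-by-parts identity holds. -/
def RepDH (g : E n → ℝ) (μ : Measure (E n)) (σ : E n → E m) : Prop :=
  (∀ᵐ x ∂μ, ‖σ x‖ = 1) ∧
  (∀ U : Set (E n), IsOpen U → μ U = G.Hvar U g) ∧
  ∀ Φ : E n → E m, ContDiff ℝ (⊤ : ℕ∞) Φ → HasCompactSupport Φ →
    ∫ x, g x * G.divH Φ x = -∫ x, (inner ℝ (Φ x) (σ x) : ℝ) ∂μ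

/-- The mollifier `J_ε = ε^{-Q} J ∘ δ_{1/ε}`. -/
def mollify (J : E n → ℝ) (ε : ℝ) : E n → ℝ := fun x => (ε ^ G.Q)⁻¹ * J (G.dil ε⁻¹ x)

/-- `F = Γ(Φ)` as functionals on `BV^{Q/(Q-1)}_H(𝔾)`, i.e.
`⟨F, g⟩ = -∫ ⟨Φ, d[D_H g]⟩` for every `g ∈ BV^{Q/(Q-1)}_H(𝔾)`. -/
def IsGammaOf (Φ : ZeroAtInftyContinuousMap (E n) (E m)) (F : (E n → ℝ) → ℝ) : Prop :=
  ∀ g, G.BVQ g → ∀ (μ : Measure (E n)) (σ : E n → E m), G.RepDH g μ σ →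
    F g = -∫ x, (inner ℝ (Φ x) (σ x) : ℝ) ∂μ

end CarnotGroup

/-- **The operator `Λ`.** For every `f ∈ L^Q(𝔾)`, the functional
`Λ(f) : g ↦ ∫ f g dx` on `BV^{Q/(Q-1)}_H(𝔾)` is a charge vanishing at infinity with
`‖Λ(f)‖_{Ch₀} ≤ C_GN ‖f‖_{L^Q}`; hence `Λ : L^Q(𝔾) → Ch₀(𝔾)` is a bounded linear
operator with norm bounded by the Gagliardo–Nirenberg constant. -/
theorem Lambda_isCharge {n m : ℕ} (G : CarnotGroup n m) (CGN : ℝ)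
    (hGN : ∀ g : E n → ℝ, G.BVQ g →
      eLpNorm g G.pQ volume ≤ ENNReal.ofReal CGN * G.Hvar Set.univ g)
    (f : E n → ℝ) (hf : MemLp f (G.Q : ℝ≥0∞) volume) :
    G.Charge (fun g => ∫ x, f x * g x) ∧
    G.chargeNorm (fun g => ∫ x, f x * g x) ≤
      ENNReal.ofReal CGN * eLpNorm f (G.Q : ℝ≥0∞) volume := by
  set Q := G.Q with hQdef
  have hQ : 1 < Q := G.one_lt_Q
  have hQ0 : (Q:ℝ≥0∞) ≠ 0 := by
    exact_mod_cast (Nat.lt_of_lt_of_le Nat.zero_lt_one hQ.le).ne'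
  have hQt : (Q:ℝ≥0∞) ≠ ⊤ := ENNReal.natCast_ne_top Q
  have h1 : (1:ℝ≥0∞) ≤ (Q:ℝ≥0∞) := by exact_mod_cast hQ.le
  have hpQ : G.pQ = (Q:ℝ≥0∞)/((Q:ℝ≥0∞)-1) := rfl
  -- conjugate exponents
  have hpq : (1:ℝ≥0∞)/1 = 1/(Q:ℝ≥0∞) + 1/G.pQ := by
    rw [hpQ, show (1:ℝ≥0∞)/((Q:ℝ≥0∞)/((Q:ℝ≥0∞)-1)) = ((Q:ℝ≥0∞)/((Q:ℝ≥0∞)-1))⁻¹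
        from one_div _,
      ENNReal.inv_div (Or.inr hQt) (Or.inr hQ0), one_div,
      ENNReal.div_add_div_same, add_comm, tsub_add_cancel_of_le h1,
      ENNReal.div_self hQ0 hQt, inv_one]
  haveI : ENNReal.HolderTriple (Q:ℝ≥0∞) G.pQ 1 := ⟨by simpa [one_div] using hpq.symm⟩
  -- Hölder: integrability of the products
  have hint : ∀ g : E n → ℝ, MemLp g G.pQ volume →
      Integrable (fun x => f x * g x) volume := by
    intro g hg
    have := hg.smul (r := 1) hf
    rwa [memLp_one_iff_integrable] at this
  -- Hölder: the quantitative bound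
  have hbound : ∀ g : E n → ℝ, MemLp g G.pQ volume →
      ENNReal.ofReal (∫ x, f x * g x) ≤
        eLpNorm f (Q:ℝ≥0∞) volume * eLpNorm g G.pQ volume := by
    intro g hg
    calc ENNReal.ofReal (∫ x, f x * g x)
        ≤ ENNReal.ofReal (∫ x, ‖f x * g x‖) :=
          ENNReal.ofReal_le_ofReal (le_trans (le_abs_self _)
            (by simpa using norm_integral_le_integral_norm (fun x => f x * g x)))
      _ = eLpNorm (fun x => f x * g x) 1 volume := by
          rw [ofReal_integral_norm_eq_lintegral_enorm (hint g hg),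
            eLpNorm_one_eq_lintegral_enorm]
      _ ≤ _ := by
          exact
            eLpNorm_smul_le_mul_eLpNorm (f := g) (φ := f) (r := 1) hg.1 hf.1
  refine ⟨⟨⟨?_, ?_⟩, ?_⟩, ?_⟩
  · -- additivity
    intro g hg h hh
    have : (fun x => f x * (g + h) x) = fun x => f x * g x + f x * h x := by
      funext x; simp [mul_add]
    show ∫ x, f x * (g + h) x = (∫ x, f x * g x) + ∫ x, f x * h x
    rw [this, integral_add (hint g hg.1) (hint h hh.1)]
  · -- homogeneity
    intro c g _
    have : (fun x => f x * (c • g) x) = fun x => c * (f x * g x) := by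
      funext x; simp [smul_eq_mul]; ring
    show ∫ x, f x * (c • g) x = c * ∫ x, f x * g x
    rw [this, integral_const_mul]
  · -- continuity on sequences `f_j ↠ 0`
    intro φ hφ hto
    have := hto.1 f hf
    simp only [Pi.zero_apply, zero_mul, integral_zero] at this
    simpa [mul_comm] using this
  · -- norm bound
    refine sSup_le ?_
    rintro c ⟨g, hg, hvar, rfl⟩
    calc ENNReal.ofReal (∫ x, f x * g x)
        ≤ eLpNorm f (Q:ℝ≥0∞) volume * eLpNorm g G.pQ volume := hbound g hg.1
      _ ≤ eLpNorm f (Q:ℝ≥0∞) volume * (ENNReal.ofReal CGN * G.Hvar Set.univ g) :=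
          mul_le_mul_right (hGN g hg) _
      _ ≤ eLpNorm f (Q:ℝ≥0∞) volume * (ENNReal.ofReal CGN * 1) :=
          mul_le_mul_right (mul_le_mul_right hvar _) _
      _ = ENNReal.ofReal CGN * eLpNorm f (Q:ℝ≥0∞) volume := by ring


end
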